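/- (Constraints (23) for the deformation data, Section 6) Let (Ω, d, d̄) be a bidifferential calculus with A = Ω^0. Let Δ, Γ be n×n matrices over A and λ, κ n×n matrices over Ω^1 with d̄Δ + [λ,Δ] = (dΔ)Δ, d̄λ + λ² = (dλ)Δ, d̄Γ − [κ,Γ] = Γ(dΓ), d̄κ − κ² = Γ(dκ). Let ω be any n×n matrix over A and define c := Γω − ωΔ and γ := d̄ω − (dω)Δ + (dΓ)ω − κω − ωλ. Then d̄γ = (dγ)Δ − (dΓ)γ + κγ − γλ − (dκ)c and d̄c = (dc)Δ + κc + cλ + Γγ − γΔ. -/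
import Mathlib


/-- A bidifferential calculus: a unital graded associative algebra
`Ω = ⊕_{r≥0} Ω^r` over a field `𝕂`, together with two `𝕂`-linear graded
derivations `d`, `dbar` of degree one satisfying `d² = d̄² = d d̄ + d̄ d = 0`. -/
structure BidiffCalculus (𝕂 : Type) [Field 𝕂] (Ω : Type) [Ring Ω] [Algebra 𝕂 Ω] where
  grade : ℕ → Submodule 𝕂 Ω
  internal : DirectSum.IsInternal grade
  one_mem : (1 : Ω) ∈ grade 0
  mul_mem : ∀ (r s : ℕ), ∀ a ∈ grade r, ∀ b ∈ grade s, a * b ∈ grade (r + s)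
  d : Ω →ₗ[𝕂] Ω
  dbar : Ω →ₗ[𝕂] Ω
  d_grade : ∀ (r : ℕ), ∀ a ∈ grade r, d a ∈ grade (r + 1)
  dbar_grade : ∀ (r : ℕ), ∀ a ∈ grade r, dbar a ∈ grade (r + 1)
  d_leibniz : ∀ (r : ℕ), ∀ a ∈ grade r, ∀ b : Ω,
      d (a * b) = d a * b + ((-1 : ℤ) ^ r) • (a * d b)
  dbar_leibniz : ∀ (r : ℕ), ∀ a ∈ grade r, ∀ b : Ω,
      dbar (a * b) = dbar a * b + ((-1 : ℤ) ^ r) • (a * dbar b)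
  d_d : ∀ a : Ω, d (d a) = 0
  dbar_dbar : ∀ a : Ω, dbar (dbar a) = 0
  d_dbar_anticomm : ∀ a : Ω, d (dbar a) + dbar (d a) = 0

namespace BidiffCalculus

variable {𝕂 : Type} [Field 𝕂] {Ω : Type} [Ring Ω] [Algebra 𝕂 Ω]

/-- Entrywise action of `d` on matrices over `Ω`. -/
def matD (S : BidiffCalculus 𝕂 Ω) {m n : ℕ} (M : Matrix (Fin m) (Fin n) Ω) :
    Matrix (Fin m) (Fin n) Ω := M.map S.d

/-- Entrywise action of `dbar` on matrices over `Ω`. -/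
def matDbar (S : BidiffCalculus 𝕂 Ω) {m n : ℕ} (M : Matrix (Fin m) (Fin n) Ω) :
    Matrix (Fin m) (Fin n) Ω := M.map S.dbar

/-- A matrix has all entries of degree `r`. -/
def MatIn (S : BidiffCalculus 𝕂 Ω) (r : ℕ) {m n : ℕ} (M : Matrix (Fin m) (Fin n) Ω) : Prop :=
  ∀ i j, M i j ∈ S.grade r

end BidiffCalculus

/-- `Φ_{i,j} = θ Δ^i Ω̂^{-1} Γ^j η`, with negative powers given by powers of inverses. -/
def Phi {R : Type} [Ring R] {m n : ℕ} (θ : Matrix (Fin m) (Fin n) R)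
    (η : Matrix (Fin n) (Fin m) R) (Δ Γ W : (Matrix (Fin n) (Fin n) R)ˣ) (i j : ℤ) :
    Matrix (Fin m) (Fin m) R :=
  θ * Units.val (Δ ^ i) * Units.val W⁻¹ * Units.val (Γ ^ j) * η

namespace BidiffCalculus

variable {𝕂 : Type} [Field 𝕂] {Ω : Type} [Ring Ω] [Algebra 𝕂 Ω]

variable (S : BidiffCalculus 𝕂 Ω) {n : ℕ}

lemma matD_add (M N : Matrix (Fin n) (Fin n) Ω) :
    S.matD (M + N) = S.matD M + S.matD N := by
  ext i j; simp [matD, Matrix.map_apply]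

lemma matD_sub (M N : Matrix (Fin n) (Fin n) Ω) :
    S.matD (M - N) = S.matD M - S.matD N := by
  ext i j; simp [matD, Matrix.map_apply]

lemma matDbar_add (M N : Matrix (Fin n) (Fin n) Ω) :
    S.matDbar (M + N) = S.matDbar M + S.matDbar N := by
  ext i j; simp [matDbar, Matrix.map_apply]

lemma matDbar_sub (M N : Matrix (Fin n) (Fin n) Ω) :
    S.matDbar (M - N) = S.matDbar M - S.matDbar N := by
  ext i j; simp [matDbar, Matrix.map_apply]

lemma matD_mul (r : ℕ) (M N : Matrix (Fin n) (Fin n) Ω) (hM : S.MatIn r M) :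
    S.matD (M * N) = S.matD M * N + ((-1 : ℤ) ^ r) • (M * S.matD N) := by
  ext i j
  simp only [matD, Matrix.map_apply, Matrix.mul_apply, Matrix.add_apply, Matrix.smul_apply,
    Finset.smul_sum, map_sum, ← Finset.sum_add_distrib]
  exact Finset.sum_congr rfl fun k _ => S.d_leibniz r _ (hM i k) _

lemma matDbar_mul (r : ℕ) (M N : Matrix (Fin n) (Fin n) Ω) (hM : S.MatIn r M) :
    S.matDbar (M * N) = S.matDbar M * N + ((-1 : ℤ) ^ r) • (M * S.matDbar N) := by
  ext i j
  simp only [matDbar, Matrix.map_apply, Matrix.mul_apply, Matrix.add_apply, Matrix.smul_apply,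
    Finset.smul_sum, map_sum, ← Finset.sum_add_distrib]
  exact Finset.sum_congr rfl fun k _ => S.dbar_leibniz r _ (hM i k) _

lemma matD_mul0 (M N : Matrix (Fin n) (Fin n) Ω) (hM : S.MatIn 0 M) :
    S.matD (M * N) = S.matD M * N + M * S.matD N := by
  rw [S.matD_mul 0 M N hM]; simp

lemma matD_mul1 (M N : Matrix (Fin n) (Fin n) Ω) (hM : S.MatIn 1 M) :
    S.matD (M * N) = S.matD M * N - M * S.matD N := by
  rw [S.matD_mul 1 M N hM]; simp [sub_eq_add_neg]

lemma matDbar_mul0 (M N : Matrix (Fin n) (Fin n) Ω) (hM : S.MatIn 0 M) :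
    S.matDbar (M * N) = S.matDbar M * N + M * S.matDbar N := by
  rw [S.matDbar_mul 0 M N hM]; simp

lemma matDbar_mul1 (M N : Matrix (Fin n) (Fin n) Ω) (hM : S.MatIn 1 M) :
    S.matDbar (M * N) = S.matDbar M * N - M * S.matDbar N := by
  rw [S.matDbar_mul 1 M N hM]; simp [sub_eq_add_neg]

lemma matD_matD (M : Matrix (Fin n) (Fin n) Ω) : S.matD (S.matD M) = 0 := by
  ext i j; simp [matD, Matrix.map_apply, S.d_d]

lemma matDbar_matDbar (M : Matrix (Fin n) (Fin n) Ω) : S.matDbar (S.matDbar M) = 0 := by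
  ext i j; simp [matDbar, Matrix.map_apply, S.dbar_dbar]

lemma matDbar_matD (M : Matrix (Fin n) (Fin n) Ω) :
    S.matDbar (S.matD M) = - S.matD (S.matDbar M) := by
  ext i j
  simp only [matD, matDbar, Matrix.map_apply, Matrix.neg_apply]
  exact eq_neg_of_add_eq_zero_right (S.d_dbar_anticomm _)

lemma matIn_matD (r : ℕ) (M : Matrix (Fin n) (Fin n) Ω) (hM : S.MatIn r M) :
    S.MatIn (r + 1) (S.matD M) := fun i j => S.d_grade r _ (hM i j)

end BidiffCalculus

/-- constraints (23) for the deformation data, Section 6. -/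
theorem deformation_constraints
    {𝕂 : Type} [Field 𝕂] [CharZero 𝕂] {Ω : Type} [Ring Ω] [Algebra 𝕂 Ω]
    (S : BidiffCalculus 𝕂 Ω) {n : ℕ}
    (Δ Γ : Matrix (Fin n) (Fin n) Ω) (lam kap : Matrix (Fin n) (Fin n) Ω)
    (hΔ0 : S.MatIn 0 Δ) (hΓ0 : S.MatIn 0 Γ) (hlam1 : S.MatIn 1 lam) (hkap1 : S.MatIn 1 kap)
    (heqΔ : S.matDbar Δ + (lam * Δ - Δ * lam) = S.matD Δ * Δ)
    (heqlam : S.matDbar lam + lam * lam = S.matD lam * Δ)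
    (heqΓ : S.matDbar Γ - (kap * Γ - Γ * kap) = Γ * S.matD Γ)
    (heqkap : S.matDbar kap - kap * kap = Γ * S.matD kap)
    (ω : Matrix (Fin n) (Fin n) Ω) (hω0 : S.MatIn 0 ω) :
    let c := Γ * ω - ω * Δ
    let γ := S.matDbar ω - S.matD ω * Δ + S.matD Γ * ω - kap * ω - ω * lam
    S.matDbar γ = S.matD γ * Δ - S.matD Γ * γ + kap * γ - γ * lam - S.matD kap * c ∧
      S.matDbar c = S.matD c * Δ + kap * c + c * lam + Γ * γ - γ * Δ := by
  intro c γ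
  have hc : c = Γ * ω - ω * Δ := rfl
  have hγ : γ = S.matDbar ω - S.matD ω * Δ + S.matD Γ * ω - kap * ω - ω * lam := rfl
  have hDω1 : S.MatIn 1 (S.matD ω) := S.matIn_matD 0 ω hω0
  have hDΓ1 : S.MatIn 1 (S.matD Γ) := S.matIn_matD 0 Γ hΓ0
  have h1 : S.matDbar Δ = S.matD Δ * Δ - (lam * Δ - Δ * lam) := eq_sub_of_add_eq heqΔ
  have h2 : S.matDbar lam = S.matD lam * Δ - lam * lam := eq_sub_of_add_eq heqlam
  have h3 : S.matDbar Γ = Γ * S.matD Γ + (kap * Γ - Γ * kap) := eq_add_of_sub_eq heqΓ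
  have h4 : S.matDbar kap = Γ * S.matD kap + kap * kap := eq_add_of_sub_eq heqkap
  constructor
  · rw [hγ, hc]
    rw [S.matDbar_sub, S.matDbar_sub, S.matDbar_add, S.matDbar_sub,
      S.matDbar_matDbar,
      S.matDbar_mul1 (S.matD ω) Δ hDω1, S.matDbar_mul1 (S.matD Γ) ω hDΓ1,
      S.matDbar_mul1 kap ω hkap1, S.matDbar_mul0 ω lam hω0,
      S.matDbar_matD ω, S.matDbar_matD Γ,
      h1, h2, h3, h4,
      S.matD_add, S.matD_sub, S.matD_mul0 Γ (S.matD Γ) hΓ0, S.matD_mul1 kap Γ hkap1,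
      S.matD_mul0 Γ kap hΓ0, S.matD_matD Γ,
      S.matD_sub, S.matD_sub, S.matD_add, S.matD_sub,
      S.matD_mul1 (S.matD ω) Δ hDω1, S.matD_mul1 (S.matD Γ) ω hDΓ1,
      S.matD_mul1 kap ω hkap1, S.matD_mul0 ω lam hω0,
      S.matD_matD ω, S.matD_matD Γ]
    noncomm_ring
  · rw [hγ, hc]
    rw [S.matDbar_sub, S.matDbar_mul0 Γ ω hΓ0, S.matDbar_mul0 ω Δ hω0,
      h1, h3,
      S.matD_sub, S.matD_mul0 Γ ω hΓ0, S.matD_mul0 ω Δ hω0]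
    noncomm_ring
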